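/- Combined end-to-end guarantee: under (a) an ε-cover {x_r} of X, (b) sample constraints |f̂ᵢ(x_r,u) − fᵢ(x_r,u)| ≤ qᵢᵀpᵢ(x_r,u) for all r, u and every i ∈ {1,…,n}, and (c) Lipschitz constants L₁⁽ⁱ⁾, L₂⁽ⁱ⁾ for |f̂ᵢ − fᵢ| and qᵢᵀpᵢ in x, the simulator map satisfies f̂(x,u) ∈ f(x,u) + ∏ᵢ[−γᵢ(x,u), γᵢ(x,u)] for all x ∈ X, u ∈ U, where γᵢ(x,u) = qᵢᵀpᵢ(x,u) + (L₁⁽ⁱ⁾ + L₂⁽ⁱ⁾)ε. -/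
import Mathlib

/-- end-to-end guarantee: ε-cover + per-component sample constraints +
Lipschitz constants yield `f̂(x,u) ∈ f(x,u) + ∏ᵢ[−γᵢ, γᵢ]` with
`γᵢ = qᵢᵀpᵢ + (L₁⁽ⁱ⁾+L₂⁽ⁱ⁾)ε`. -/
theorem stmt_10 {n : ℕ} {U : Type*} [Fintype U]
    (X : Set (EuclideanSpace ℝ (Fin n)))
    (f fh : EuclideanSpace ℝ (Fin n) → U → EuclideanSpace ℝ (Fin n))
    (z : Fin n → ℕ)
    (p : (i : Fin n) → EuclideanSpace ℝ (Fin n) → U → Fin (z i) → ℝ)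
    (q : (i : Fin n) → Fin (z i) → ℝ)
    (ε : ℝ) (hε : 0 < ε)
    (L1 L2 : Fin n → ℝ) (hL1 : ∀ i, 0 ≤ L1 i) (hL2 : ∀ i, 0 ≤ L2 i)
    (N : ℕ) (xs : Fin N → EuclideanSpace ℝ (Fin n))
    (hxs : ∀ r, xs r ∈ X)
    (hcov : ∀ x ∈ X, ∃ r, ‖x - xs r‖ ≤ ε)
    (hdata : ∀ r : Fin N, ∀ u : U, ∀ i : Fin n,
      |fh (xs r) u i - f (xs r) u i| ≤ ∑ l, q i l * p i (xs r) u l)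
    (hlip1 : ∀ i : Fin n, ∀ u : U, ∀ x ∈ X, ∀ y ∈ X,
      abs (|fh x u i - f x u i| - |fh y u i - f y u i|) ≤ L1 i * ‖x - y‖)
    (hlip2 : ∀ i : Fin n, ∀ u : U, ∀ x ∈ X, ∀ y ∈ X,
      |(∑ l, q i l * p i x u l) - ∑ l, q i l * p i y u l| ≤ L2 i * ‖x - y‖) :
    ∀ x ∈ X, ∀ u : U, ∀ i : Fin n,
      f x u i - ((∑ l, q i l * p i x u l) + (L1 i + L2 i) * ε) ≤ fh x u i ∧
      fh x u i ≤ f x u i + ((∑ l, q i l * p i x u l) + (L1 i + L2 i) * ε) := by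
  intro x hx u i
  obtain ⟨r, hr⟩ := hcov x hx
  have h1 := hlip1 i u x hx (xs r) (hxs r)
  have h2 := hlip2 i u x hx (xs r) (hxs r)
  have hd := hdata r u i
  have hL1x : L1 i * ‖x - xs r‖ ≤ L1 i * ε := by
    exact mul_le_mul_of_nonneg_left hr (hL1 i)
  have hL2x : L2 i * ‖x - xs r‖ ≤ L2 i * ε := by
    exact mul_le_mul_of_nonneg_left hr (hL2 i)
  have key : |fh x u i - f x u i| ≤ (∑ l, q i l * p i x u l) + (L1 i + L2 i) * ε := by
    have a1 : |fh x u i - f x u i| - |fh (xs r) u i - f (xs r) u i| ≤ L1 i * ε :=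
      le_trans (le_trans (le_abs_self _) h1) hL1x
    have a2 : (∑ l, q i l * p i (xs r) u l) - (∑ l, q i l * p i x u l) ≤ L2 i * ε := by
      have := abs_sub_comm (∑ l, q i l * p i x u l) (∑ l, q i l * p i (xs r) u l)
      nlinarith [le_abs_self ((∑ l, q i l * p i (xs r) u l) - ∑ l, q i l * p i x u l),
        abs_sub_abs_le_abs_sub (∑ l, q i l * p i (xs r) u l) (∑ l, q i l * p i x u l)]
    linarith
  rw [abs_le] at key
  constructor <;> linarith [key.1, key.2]
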